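/- Rusnak's analytical solution: Let A, C, Σ be constant n×n real matrices with C and Σ symmetric. Let P be a symmetric matrix solving the algebraic Riccati equation AᵀP + PA + C + PΣP = 0, and set B = (A + ΣP)ᵀ. Let r : ℝ → (n×n real matrices) be differentiable on an interval I containing 0 with r'(t) = Aᵀr(t) + r(t)A + C + r(t)Σr(t) and r(t) − P invertible for all t ∈ I. Then for all t ∈ I, exp(tBᵀ)(r(t) − P)⁻¹exp(tB) = (r(0) − P)⁻¹ − ∫₀ᵗ exp(τBᵀ) Σ exp(τB) dτ. -/

import Mathlib

/-!
Write `Q = r - P`. Since `P` is an equilibrium, the Riccati field centred at `P` has no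
constant term: `Q' = B Q + Q Bᵀ + Q Σ Q`. Hence `(Q⁻¹)' = -(Bᵀ Q⁻¹ + Q⁻¹ B + Σ)`, and
conjugating by `exp (t Bᵀ)`, `exp (t B)` cancels the linear terms, leaving the derivative
`-exp (t Bᵀ) Σ exp (t B)`. The fundamental theorem of calculus on `I` concludes.
-/

open scoped Matrix

theorem HasDerivWithinAt.ringInverse {𝕜 R : Type*} [NontriviallyNormedField 𝕜] [NormedRing R]
    [NormedAlgebra 𝕜 R] [HasSummableGeomSeries R] {Q : 𝕜 → R} {Q' : R} {s : Set 𝕜} {t : 𝕜}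
    (hQ : HasDerivWithinAt Q Q' s t) (hu : IsUnit (Q t)) :
    HasDerivWithinAt (fun u => Ring.inverse (Q u))
      (-(Ring.inverse (Q t) * Q' * Ring.inverse (Q t))) s t := by
  obtain ⟨u, hu⟩ := hu
  have hinv : HasFDerivAt Ring.inverse
      (-ContinuousLinearMap.mulLeftRight 𝕜 R ↑u⁻¹ ↑u⁻¹) (Q t) :=
    hu ▸ hasFDerivAt_ringInverse u
  simpa [← hu, Ring.inverse_unit, Function.comp_def] using hinv.comp_hasDerivWithinAt t hQ

theorem HasDerivWithinAt.exp_smul_mul_ringInverse_mul_exp_smul {𝕂 𝔸 : Type*} [RCLike 𝕂]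
    [NormedRing 𝔸] [NormedAlgebra 𝕂 𝔸] [CompleteSpace 𝔸] {X Y S : 𝔸} {Q : 𝕂 → 𝔸}
    {s : Set 𝕂} {t : 𝕂} (hQ : HasDerivWithinAt Q (X * Q t + Q t * Y + Q t * S * Q t) s t)
    (hu : IsUnit (Q t)) :
    HasDerivWithinAt
      (fun u => NormedSpace.exp (u • Y) * Ring.inverse (Q u) * NormedSpace.exp (u • X))
      (-(NormedSpace.exp (t • Y) * S * NormedSpace.exp (t • X))) s t := by
  have hW : ∀ W, W * Q t = 1 → Q t * W = 1 →
      W * (X * Q t + Q t * Y + Q t * S * Q t) * W = W * X + Y * W + S := fun W hl hr =>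
    calc _ = W * X * (Q t * W) + W * Q t * Y * W + W * Q t * S * (Q t * W) := by noncomm_ring
      _ = _ := by rw [hl, hr]; noncomm_ring
  have hY : Y * NormedSpace.exp (t • Y) = NormedSpace.exp (t • Y) * Y :=
    ((Commute.refl Y).smul_right t).exp_right.eq
  refine (((hasDerivAt_exp_smul_const' Y t).hasDerivWithinAt.mul (hQ.ringInverse hu)).mul
    (hasDerivAt_exp_smul_const' X t).hasDerivWithinAt).congr_deriv ?_
  simp only [Pi.mul_apply]
  rw [hW _ (Ring.inverse_mul_cancel _ hu) (Ring.mul_inverse_cancel _ hu), hY]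
  noncomm_ring

theorem Convex.integral_eq_sub_of_hasDerivWithinAt {E : Type*} [NormedAddCommGroup E]
    [NormedSpace ℝ E] [CompleteSpace E] {f f' : ℝ → E} {I : Set ℝ} (hI : Convex ℝ I)
    (hf : ∀ x ∈ I, HasDerivWithinAt f (f' x) I x) {a b : ℝ} (ha : a ∈ I) (hb : b ∈ I)
    (hint : IntervalIntegrable f' MeasureTheory.volume a b) :
    ∫ x in a..b, f' x = f b - f a := by
  have hab : Set.uIcc a b ⊆ I := hI.ordConnected.uIcc_subset ha hb
  refine intervalIntegral.integral_eq_sub_of_hasDeriv_right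
    (fun x hx => ((hf x (hab hx)).mono hab).continuousWithinAt) (fun x hx => ?_) hint
  have hI_nhds : I ∈ nhdsWithin x (Set.Ioi x) :=
    Filter.mem_of_superset (Icc_mem_nhdsGT hx.2) fun y hy => hab ⟨hx.1.le.trans hy.1, hy.2⟩
  exact (hf x (hab (Set.Ioo_subset_Icc_self hx))).mono_of_mem_nhdsWithin hI_nhds

theorem riccati_eq_centered {R : Type*} [Ring R] {A A' C S P : R}
    (hP : A' * P + P * A + C + P * S * P = 0) (X : R) :
    A' * X + X * A + C + X * S * X
      = (A' + P * S) * (X - P) + (X - P) * (A + S * P) + (X - P) * S * (X - P) := by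
  rw [← sub_eq_zero, ← hP]
  noncomm_ring

attribute [local instance] Matrix.normedAddCommGroup Matrix.normedSpace

theorem rusnak_analytic_solution_general (n : ℕ)
    (A C Sig : Matrix (Fin n) (Fin n) ℝ) (hSig : Sig.IsSymm)
    (P : Matrix (Fin n) (Fin n) ℝ) (hP : P.IsSymm)
    (hPRic : Aᵀ * P + P * A + C + P * Sig * P = 0)
    (B : Matrix (Fin n) (Fin n) ℝ) (hB : B = (A + Sig * P)ᵀ)
    (r : ℝ → Matrix (Fin n) (Fin n) ℝ) (I : Set ℝ) (hI : Convex ℝ I) (h0 : (0 : ℝ) ∈ I)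
    (hr : ∀ t ∈ I, HasDerivWithinAt r
      (Aᵀ * r t + r t * A + C + r t * Sig * r t) I t)
    (hrinv : ∀ t ∈ I, IsUnit (r t - P)) :
    ∀ t ∈ I,
      NormedSpace.exp (t • Bᵀ) * (r t - P)⁻¹ * NormedSpace.exp (t • B)
        = (r 0 - P)⁻¹
            - ∫ τ in (0 : ℝ)..t,
                NormedSpace.exp (τ • Bᵀ) * Sig * NormedSpace.exp (τ • B) := by
  intro t ht
  have hBt : Bᵀ = A + Sig * P := by rw [hB, Matrix.transpose_transpose]
  have hB' : B = Aᵀ + P * Sig := by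
    rw [hB, Matrix.transpose_add, Matrix.transpose_mul, hP.eq, hSig.eq]
  have hQ : ∀ s ∈ I, HasDerivWithinAt (fun u => r u - P)
      (B * (r s - P) + (r s - P) * Bᵀ + (r s - P) * Sig * (r s - P)) I s := fun s hs => by
    rw [hBt, hB', ← riccati_eq_centered hPRic]
    exact (hr s hs).sub_const P
  have hg : ∀ s ∈ I, HasDerivWithinAt
      (fun u => NormedSpace.exp (u • Bᵀ) * (r u - P)⁻¹ * NormedSpace.exp (u • B))
      (-(NormedSpace.exp (s • Bᵀ) * Sig * NormedSpace.exp (s • B))) I s := fun s hs => by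
    simp only [Matrix.nonsing_inv_eq_ringInverse]
    -- `HasDerivWithinAt` and `NormedSpace.exp` only see the topology, which the sup norm of the
    -- statement shares with the submultiplicative operator norm needed by the algebra lemmas.
    open scoped Matrix.Norms.Operator in
    exact (hQ s hs).exp_smul_mul_ringInverse_mul_exp_smul (hrinv s hs)
  have hcont : Continuous fun τ : ℝ =>
      NormedSpace.exp (τ • Bᵀ) * Sig * NormedSpace.exp (τ • B) := by
    open scoped Matrix.Norms.Operator in fun_prop
  have := hI.integral_eq_sub_of_hasDerivWithinAt hg h0 ht (hcont.neg.intervalIntegrable 0 t)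
  rw [intervalIntegral.integral_neg] at this
  simp only [zero_smul, NormedSpace.exp_zero, one_mul, mul_one] at this
  rwa [eq_comm, sub_eq_iff_eq_add', ← sub_eq_add_neg] at this

/-- Rusnak's analytical solution. If `P` solves the algebraic Riccati
equation `AᵀP + PA + C + PΣP = 0`, `B = (A + ΣP)ᵀ`, and `r` solves the forward DRE
`r' = Aᵀr + rA + C + rΣr` on an interval `I ∋ 0` with `r t − P` invertible, then for all
`t ∈ I`, `exp(tBᵀ)(r t − P)⁻¹exp(tB) = (r 0 − P)⁻¹ − ∫₀ᵗ exp(τBᵀ) Σ exp(τB) dτ`. -/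
theorem rusnak_analytic_solution (n : ℕ)
    (A C Sig : Matrix (Fin n) (Fin n) ℝ) (hC : C.IsSymm) (hSig : Sig.IsSymm)
    (P : Matrix (Fin n) (Fin n) ℝ) (hP : P.IsSymm)
    (hPRic : Aᵀ * P + P * A + C + P * Sig * P = 0)
    (B : Matrix (Fin n) (Fin n) ℝ) (hB : B = (A + Sig * P)ᵀ)
    (r : ℝ → Matrix (Fin n) (Fin n) ℝ) (I : Set ℝ) (hI : Convex ℝ I) (h0 : (0 : ℝ) ∈ I)
    (hr : ∀ t ∈ I, HasDerivWithinAt r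
      (Aᵀ * r t + r t * A + C + r t * Sig * r t) I t)
    (hrinv : ∀ t ∈ I, IsUnit (r t - P)) :
    ∀ t ∈ I,
      NormedSpace.exp (t • Bᵀ) * (r t - P)⁻¹ * NormedSpace.exp (t • B)
        = (r 0 - P)⁻¹
            - ∫ τ in (0 : ℝ)..t,
                NormedSpace.exp (τ • Bᵀ) * Sig * NormedSpace.exp (τ • B) :=
  rusnak_analytic_solution_general n A C Sig hSig P hP hPRic B hB r I hI h0 hr hrinv
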